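/- Let x < a and b ∈ ℝ. Then ∫_0^∞ (a−x)·t^{−3/2}·φ((a + bt − x)/√t) dt = e^{−(a−x)(b + |b|)}. In particular the inverse Gaussian first-passage-time density is non-defective (total mass 1) when b ≤ 0, and has total mass e^{−2b(a−x)} < 1 when b > 0. -/

import Mathlib

open MeasureTheory

/-- The standard normal density `φ`. -/
noncomputable def stdPhi (z : ℝ) : ℝ := Real.exp (-z ^ 2 / 2) / Real.sqrt (2 * Real.pi)

/-- The (possibly defective) first-passage-time density of Brownian motion started at `x`
through the line `a + b t`. -/
noncomputable def fpt (a x b t : ℝ) : ℝ :=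
  (a - x) * t ^ (-(3:ℝ) / 2) * stdPhi ((a + b * t - x) / Real.sqrt t)

/-!
With `c = a - x`, the function
`G(t) = Φ(-(c + b t)/√t) + e^{-2bc} Φ((b t - c)/√t)` is an antiderivative of the density on
`(0, ∞)`: completing the square gives `e^{-2bc} φ((b t - c)/√t) = φ((b t + c)/√t)`, and the two
terms of `G'` combine into `c t^{-3/2} φ((c + b t)/√t)`. Both arguments tend to `-∞` as `t → 0⁺`,
so `G(0⁺) = 0`. As `t → ∞`, `G → 1` when `b ≤ 0`, and for `b > 0` the identity
`G_b = e^{-2bc} G_{-b}` gives `G → e^{-2bc}`. The density is nonnegative, so it is integrable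
with integral `G(∞) - G(0⁺)`.
-/

open Filter Real Set Topology MeasureTheory ProbabilityTheory
open scoped NNReal

section GaussianCDF

lemma continuous_gaussianPDFReal (μ : ℝ) (v : ℝ≥0) : Continuous (gaussianPDFReal μ v) := by
  rw [gaussianPDFReal_def]; fun_prop

variable (μ : ℝ) {v : ℝ≥0}

lemma cdf_gaussianReal_eq_integral (hv : v ≠ 0) (z : ℝ) :
    cdf (gaussianReal μ v) z = ∫ t in Iic z, gaussianPDFReal μ v t := by
  rw [cdf_eq_real, measureReal_def, gaussianReal_apply_eq_integral μ hv, ENNReal.toReal_ofReal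
    (setIntegral_nonneg measurableSet_Iic fun t _ => gaussianPDFReal_nonneg μ v t)]

lemma hasDerivAt_cdf_gaussianReal (hv : v ≠ 0) (z : ℝ) :
    HasDerivAt (cdf (gaussianReal μ v)) (gaussianPDFReal μ v z) z := by
  have hcont := continuous_gaussianPDFReal μ v
  have hint (y : ℝ) := (integrable_gaussianPDFReal μ v).integrableOn (s := Iic y)
  have h : HasDerivAt (fun w => cdf (gaussianReal μ v) 0 + ∫ t in (0:ℝ)..w, gaussianPDFReal μ v t)
      (gaussianPDFReal μ v z) z :=
    (intervalIntegral.integral_hasDerivAt_right (hcont.intervalIntegrable _ _)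
      (hcont.stronglyMeasurableAtFilter _ _) hcont.continuousAt).const_add _
  refine h.congr_of_eventuallyEq (Eventually.of_forall fun w => ?_)
  simp only [cdf_gaussianReal_eq_integral μ hv]
  rw [← intervalIntegral.integral_Iic_sub_Iic (hint _) (hint _)]
  ring

lemma cdf_gaussianReal_self (hv : v ≠ 0) : cdf (gaussianReal μ v) μ = 1 / 2 := by
  have := nullSingletonClass_gaussianReal (μ := μ) hv
  have hrefl : (gaussianReal μ v).real (Iic μ) = (gaussianReal μ v).real (Ici μ) := by
    have hmap : (gaussianReal μ v).map (2 * μ - ·) = gaussianReal μ v := by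
      rw [gaussianReal_map_const_sub]; ring_nf
    rw [← hmap, map_measureReal_apply (by fun_prop) measurableSet_Iic, hmap]
    congr 1
    ext t
    simp only [mem_preimage, mem_Iic, mem_Ici]
    constructor <;> intro <;> linarith
  have hsum :=
    measureReal_add_measureReal_compl (μ := gaussianReal μ v) (measurableSet_Iic (a := μ))
  rw [compl_Iic, measureReal_congr Ioi_ae_eq_Ici, ← hrefl, probReal_univ] at hsum
  rw [cdf_eq_real]; linarith

end GaussianCDF

lemma stdPhi_eq_gaussianPDFReal : stdPhi = gaussianPDFReal 0 1 := by
  ext z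
  simp [stdPhi, gaussianPDFReal_def, div_eq_inv_mul, mul_comm]

lemma stdPhi_neg (z : ℝ) : stdPhi (-z) = stdPhi z := by simp [stdPhi]

lemma stdPhi_add (p q : ℝ) : stdPhi (p + q) = exp (-(2 * p * q)) * stdPhi (p - q) := by
  unfold stdPhi; rw [mul_div_assoc', ← exp_add]; congr 2; ring

section PassageCDF

local notation "Φ" => cdf (gaussianReal 0 1)

lemma hasDerivAt_cdf_stdGaussian (z : ℝ) : HasDerivAt Φ (stdPhi z) z := by
  simpa [stdPhi_eq_gaussianPDFReal] using hasDerivAt_cdf_gaussianReal 0 one_ne_zero z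

-- `P(τ ≤ w²)` for the first passage time `τ` of Brownian motion from `0` through `c + b t`.
noncomputable def passageCDF (b c w : ℝ) : ℝ :=
  Φ (-(c / w) - b * w) + exp (-(2 * b * c)) * Φ (b * w - c / w)

variable {b c w : ℝ}

lemma hasDerivAt_passageCDF (hw : w ≠ 0) :
    HasDerivAt (passageCDF b c) (2 * c / w ^ 2 * stdPhi (b * w + c / w)) w := by
  have hdiv : HasDerivAt (fun w => c / w) (-(c / w ^ 2)) w := by
    simpa [div_eq_mul_inv, mul_neg] using (hasDerivAt_inv hw).const_mul c
  have hlin : HasDerivAt (fun w => b * w) b w := by simpa using (hasDerivAt_id w).const_mul b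
  have h := ((hasDerivAt_cdf_stdGaussian _).comp w (hdiv.neg.sub hlin)).add
    (((hasDerivAt_cdf_stdGaussian _).comp w (hlin.sub hdiv)).const_mul (exp (-(2 * b * c))))
  refine h.congr_deriv ?_
  simp only [Pi.sub_apply, Pi.neg_apply]
  have h1 : stdPhi (-(c / w) - b * w) = stdPhi (b * w + c / w) := by
    rw [← stdPhi_neg]; ring_nf
  have h2 : exp (-(2 * b * c)) * stdPhi (b * w - c / w) = stdPhi (b * w + c / w) := by
    rw [stdPhi_add, show 2 * (b * w) * (c / w) = 2 * b * c by field_simp]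
  rw [h1, ← h2]
  field_simp
  ring

lemma passageCDF_eq_exp_mul_passageCDF_neg (b c w : ℝ) :
    passageCDF b c w = exp (-(2 * b * c)) * passageCDF (-b) c w := by
  simp only [passageCDF]
  rw [mul_add, ← mul_assoc, ← exp_add]
  ring_nf
  simp [add_comm]

lemma tendsto_passageCDF_nhdsGT_zero (hc : 0 < c) :
    Tendsto (passageCDF b c) (𝓝[>] 0) (𝓝 0) := by
  have hinv : Tendsto (fun w => c / w) (𝓝[>] 0) atTop :=
    (tendsto_inv_nhdsGT_zero.const_mul_atTop hc).congr fun w => (div_eq_mul_inv c w).symm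
  have hlin : Tendsto (fun w => b * w) (𝓝[>] 0) (𝓝 0) := by
    simpa using ((continuous_const_mul b).tendsto 0).mono_left nhdsWithin_le_nhds
  have h₁ : Tendsto (fun w => -(c / w) - b * w) (𝓝[>] 0) atBot := by
    simpa [sub_eq_add_neg] using (tendsto_neg_atTop_atBot.comp hinv).atBot_add hlin.neg
  have h₂ : Tendsto (fun w => b * w - c / w) (𝓝[>] 0) atBot := by
    simpa [sub_eq_add_neg] using hlin.add_atBot (tendsto_neg_atTop_atBot.comp hinv)
  unfold passageCDF
  simpa using ((tendsto_cdf_atBot _).comp h₁).add (((tendsto_cdf_atBot _).comp h₂).const_mul _)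

lemma tendsto_passageCDF_atTop_of_nonpos (hb : b ≤ 0) :
    Tendsto (passageCDF b c) atTop (𝓝 1) := by
  have hinv : Tendsto (fun w => c / w) atTop (𝓝 0) := tendsto_const_nhds.div_atTop tendsto_id
  rcases hb.lt_or_eq with hb | rfl
  · have hlin : Tendsto (fun w => -b * w) atTop atTop := tendsto_id.const_mul_atTop (neg_pos.2 hb)
    have h₁ : Tendsto (fun w => -(c / w) - b * w) atTop atTop := by
      simpa [sub_eq_add_neg] using hinv.neg.add_atTop hlin
    have h₂ : Tendsto (fun w => b * w - c / w) atTop atBot := by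
      simpa [sub_eq_add_neg] using (tendsto_neg_atTop_atBot.comp hlin).atBot_add hinv.neg
    unfold passageCDF
    simpa using ((tendsto_cdf_atTop _).comp h₁).add (((tendsto_cdf_atBot _).comp h₂).const_mul _)
  · have h :=
      (hasDerivAt_cdf_stdGaussian 0).continuousAt.tendsto.comp (neg_zero (G := ℝ) ▸ hinv.neg)
    have h2 := h.add h
    norm_num [cdf_gaussianReal_self 0 one_ne_zero] at h2
    unfold passageCDF
    simpa using h2

lemma tendsto_passageCDF_atTop (b c : ℝ) :
    Tendsto (passageCDF b c) atTop (𝓝 (exp (-c * (b + |b|)))) := by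
  rcases le_or_gt b 0 with hb | hb
  · simpa [abs_of_nonpos hb] using tendsto_passageCDF_atTop_of_nonpos (c := c) hb
  · have h := (tendsto_passageCDF_atTop_of_nonpos (c := c) (neg_nonpos.2 hb.le)).const_mul
      (exp (-(2 * b * c)))
    rw [abs_of_pos hb]
    convert h using 2
    · exact passageCDF_eq_exp_mul_passageCDF_neg b c _
    · ring_nf

end PassageCDF

theorem integral_Ioi_of_hasDerivAt_of_nonneg_of_tendsto {g g' : ℝ → ℝ} {a m l : ℝ}
    (hga : Tendsto g (𝓝[>] a) (𝓝 m)) (hderiv : ∀ x ∈ Ioi a, HasDerivAt g (g' x) x)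
    (hg' : ∀ x ∈ Ioi a, 0 ≤ g' x) (hgl : Tendsto g atTop (𝓝 l)) :
    ∫ x in Ioi a, g' x = l - m := by
  classical
  have hcont : ContinuousWithinAt (Function.update g a m) (Ici a) a := by
    rw [← continuousWithinAt_Ioi_iff_Ici, continuousWithinAt_update_same,
      sdiff_singleton_eq_self self_notMem_Ioi]
    exact hga
  have hderiv' (x : ℝ) (hx : x ∈ Ioi a) : HasDerivAt (Function.update g a m) (g' x) x :=
    (hderiv x hx).congr_of_eventuallyEq <|
      (eventually_ne_nhds (ne_of_gt hx)).mono fun y hy => Function.update_of_ne hy _ _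
  have hgl' : Tendsto (Function.update g a m) atTop (𝓝 l) :=
    hgl.congr' <| (eventually_gt_atTop a).mono fun y hy => (Function.update_of_ne hy.ne' _ _).symm
  simpa using integral_Ioi_of_hasDerivAt_of_nonneg hcont hderiv' hg' hgl'

lemma rpow_neg_three_halves {s : ℝ} (hs : 0 < s) : s ^ (-(3 : ℝ) / 2) = (s * √s)⁻¹ := by
  rw [show -(3 : ℝ) / 2 = -(1 + 1 / 2) by norm_num, rpow_neg hs.le, rpow_add hs, rpow_one,
    ← sqrt_eq_rpow]

lemma hasDerivAt_passageCDF_sqrt (a x b : ℝ) {s : ℝ} (hs : 0 < s) :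
    HasDerivAt (fun s => passageCDF b (a - x) √s) (fpt a x b s) s := by
  have hw : √s ≠ 0 := (sqrt_pos.2 hs).ne'
  have harg : b * √s + (a - x) / √s = (a + b * s - x) / √s := by
    field_simp
    rw [sq_sqrt hs.le]
    ring
  refine ((hasDerivAt_passageCDF hw).comp s (hasDerivAt_sqrt hs.ne')).congr_deriv ?_
  rw [fpt, rpow_neg_three_halves hs, sq_sqrt hs.le, harg]
  field_simp

lemma fpt_nonneg {a x : ℝ} (b : ℝ) (hx : x ≤ a) {t : ℝ} (ht : 0 ≤ t) : 0 ≤ fpt a x b t :=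
  mul_nonneg (mul_nonneg (sub_nonneg.2 hx) (rpow_nonneg ht _))
    (div_nonneg (exp_pos _).le (sqrt_nonneg _))

lemma tendsto_sqrt_nhdsGT_zero : Tendsto (√·) (𝓝[>] (0 : ℝ)) (𝓝[>] 0) :=
  tendsto_nhdsWithin_iff.2
    ⟨by simpa using (continuous_sqrt.tendsto 0).mono_left nhdsWithin_le_nhds,
      eventually_mem_nhdsWithin.mono fun _ hs => sqrt_pos.2 hs⟩

theorem integral_fpt {a x : ℝ} (b : ℝ) (hx : x < a) :
    ∫ t in Ioi (0 : ℝ), fpt a x b t = exp (-(a - x) * (b + |b|)) := by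
  simpa using integral_Ioi_of_hasDerivAt_of_nonneg_of_tendsto
    ((tendsto_passageCDF_nhdsGT_zero (b := b) (sub_pos.2 hx)).comp tendsto_sqrt_nhdsGT_zero)
    (fun s hs => hasDerivAt_passageCDF_sqrt a x b hs) (fun s hs => fpt_nonneg b hx.le hs.le)
    ((tendsto_passageCDF_atTop b (a - x)).comp tendsto_sqrt_atTop)

/-- for `x < a`, `∫_0^∞ (a-x) t^{-3/2} φ((a+bt-x)/√t) dt = e^{-(a-x)(b+|b|)}`;
non-defective for `b ≤ 0`, total mass `e^{-2b(a-x)} < 1` for `b > 0`. -/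
theorem stmt_9 (a x b : ℝ) (hx : x < a) :
    (∫ t in Set.Ioi (0:ℝ), fpt a x b t) = Real.exp (-(a - x) * (b + |b|)) ∧
    (b ≤ 0 → (∫ t in Set.Ioi (0:ℝ), fpt a x b t) = 1) ∧
    (0 < b → (∫ t in Set.Ioi (0:ℝ), fpt a x b t) = Real.exp (-2 * b * (a - x)) ∧
      Real.exp (-2 * b * (a - x)) < 1) := by
  refine ⟨integral_fpt b hx, fun hb => ?_, fun hb => ⟨?_, ?_⟩⟩
  · simp [integral_fpt b hx, abs_of_nonpos hb]
  · rw [integral_fpt b hx, abs_of_pos hb]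
    ring_nf
  · exact exp_lt_one_iff.2 (by nlinarith)
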